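/- arXiv:2007.09940 — 4 statements merged into one kernel-verified Lean document; each statement's English description precedes it below -/
import Mathlib

section
/- Every integer n ≥ 0 can be written in exactly one way as n = Σ_{0≤i≤r} a_i f_i with digits a_i ∈ {0,1}, a_r ≠ 0 (the empty sum for n = 0), such that a_i·a_{i+1} = 0 for all 0 ≤ i < r and a_i·a_{i+2} = 0 for all even i with 0 ≤ i < r−1. Equivalently: for every n ≥ 0 there is a unique finitely supported sequence (a_i)_{i≥0} with values in {0,1} satisfying a_i·a_{i+1} = 0 for all i ≥ 0 and a_i·a_{i+2} = 0 for all even i ≥ 0, such that n = Σ_{i≥0} a_i f_i. -/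
/-- The substitution τ: 1 → 101, 0 → 1 on the alphabet {0,1}. -/
def tau (b : ℕ) : List ℕ := if b = 1 then [1, 0, 1] else [1]

/-- The iterated word τ^n(1). -/
def tauIter : ℕ → List ℕ
  | 0 => [1]
  | n + 1 => ((tauIter n).map tau).flatten

/-- `s` is the fixed point of τ beginning with 1: it agrees with every
iterate `τ^n(1)` on its length. -/
def IsFixedSeq (s : ℕ → ℕ) : Prop :=
  ∀ n j, j < (tauIter n).length → s j = (tauIter n).getD j 0

/-- The sequence (f_n): f_0 = 1, f_1 = 2, f_{2n+2} = f_{2n} + f_{2n+1},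
f_{2n+3} = f_{2n} + f_{2n+2}. -/
def IsFSeq (f : ℕ → ℕ) : Prop :=
  f 0 = 1 ∧ f 1 = 2 ∧ (∀ n, f (2*n+2) = f (2*n) + f (2*n+1)) ∧
    (∀ n, f (2*n+3) = f (2*n) + f (2*n+2))

/-- `a` is the f-representation of `n`: digits in {0,1}, finitely supported,
a_i a_{i+1} = 0 for all i, a_i a_{i+2} = 0 for even i, and n = Σ a_i f_i. -/
def IsFRep (f : ℕ → ℕ) (n : ℕ) (a : ℕ → ℕ) : Prop :=
  (∀ i, a i ≤ 1) ∧ (∀ i, a i * a (i+1) = 0) ∧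
  (∀ i, Even i → a i * a (i+2) = 0) ∧
  ∃ N, (∀ i, N ≤ i → a i = 0) ∧ n = ∑ i ∈ Finset.range N, a i * f i

/-- The truncated f-representation Φ_k(n) = Σ_{i=0}^{2k+2} a_i(n) f_i. -/
def Phi (f : ℕ → ℕ) (a : ℕ → ℕ → ℕ) (k n : ℕ) : ℕ :=
  ∑ i ∈ Finset.range (2*k+3), a n i * f i

/-- The Hankel determinant H_{m,n} = det (s_{m+i+j})_{0 ≤ i,j ≤ n-1}. -/
def H (s : ℕ → ℕ) (m n : ℕ) : ℤ :=
  (Matrix.of fun i j : Fin n => (s (m + i.1 + j.1) : ℤ)).det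

section Aux
variable {f : ℕ → ℕ}

/-- digit constraints -/
def GoodDigits (a : ℕ → ℕ) : Prop :=
  (∀ i, a i ≤ 1) ∧ (∀ i, a i * a (i+1) = 0) ∧ (∀ i, Even i → a i * a (i+2) = 0)

lemma cases4 (r : ℕ) : r = 0 ∨ r = 1 ∨ (∃ m, r = 2*m+2) ∨ (∃ m, r = 2*m+3) := by
  rcases Nat.even_or_odd r with ⟨m, hm⟩ | ⟨m, hm⟩
  · rcases Nat.eq_zero_or_pos m with h | h
    · left; omega
    · right; right; left; exact ⟨m - 1, by omega⟩
  · rcases Nat.eq_zero_or_pos m with h | h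
    · right; left; omega
    · right; right; right; exact ⟨m - 1, by omega⟩

lemma f_pos (hf : IsFSeq f) : ∀ r, 0 < f r := by
  obtain ⟨h0, h1, h2, h3⟩ := hf
  intro r
  induction r using Nat.strong_induction_on with
  | _ r ih =>
    rcases cases4 r with rfl | rfl | ⟨m, rfl⟩ | ⟨m, rfl⟩
    · omega
    · omega
    · have := ih (2*m) (by omega); rw [h2]; omega
    · have := ih (2*m) (by omega); rw [h3]; omega

lemma f_mono (hf : IsFSeq f) : ∀ r, f r < f (r+1) := by
  obtain ⟨h0, h1, h2, h3⟩ := id hf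
  intro r
  rcases Nat.even_or_odd r with ⟨m, hm⟩ | ⟨m, hm⟩
  · -- r = 2m even, f (2m) < f (2m+1)
    have hr : r = 2*m := by omega
    subst hr
    rcases Nat.eq_zero_or_pos m with h | h
    · subst h; show f 0 < f 1; omega
    · have : 2*m+1 = 2*(m-1)+3 := by omega
      rw [this, h3 (m-1)]
      have : 2*(m-1)+2 = 2*m := by omega
      rw [this]
      have := f_pos hf (2*(m-1))
      omega
  · have hr : r = 2*m+1 := by omega
    subst hr
    rw [h2 m]
    have := f_pos hf (2*m)
    omega

lemma f_lb (hf : IsFSeq f) : ∀ r, r < f r := by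
  intro r
  induction r with
  | zero => have := f_pos hf 0; omega
  | succ r ih => have := f_mono hf r; omega

/-- bound lemma -/
lemma sum_lt (hf : IsFSeq f) (a : ℕ → ℕ) (ha : GoodDigits a) :
    ∀ r, ∑ i ∈ Finset.range r, a i * f i < f r := by
  obtain ⟨h0, h1, h2, h3⟩ := id hf
  obtain ⟨g1, g2, g3⟩ := ha
  intro r
  induction r using Nat.strong_induction_on with
  | _ r ih =>
    rcases cases4 r with rfl | rfl | ⟨m, rfl⟩ | ⟨m, rfl⟩
    · simp; omega
    · simp only [Finset.sum_range_one]
      have := g1 0; rw [h0, h1]; omega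
    · -- r = 2m+2, top index 2m+1
      rw [Finset.sum_range_succ]
      have htop := g1 (2*m+1)
      interval_cases h : a (2*m+1)
      · have := ih (2*m+1) (by omega)
        have h5 := f_mono hf (2*m+1)
        rw [show 2*m+1+1 = 2*m+2 from rfl] at h5
        omega
      · -- a (2m+1) = 1, so a (2m) = 0
        have hprev : a (2*m) = 0 := by
          have := g2 (2*m); rw [h] at this; omega
        rw [Finset.sum_range_succ, hprev]
        have := ih (2*m) (by omega)
        rw [h2 m]
        omega
    · -- r = 2m+3, top index 2m+2 (even)
      rw [Finset.sum_range_succ]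
      have htop := g1 (2*m+2)
      interval_cases h : a (2*m+2)
      · have := ih (2*m+2) (by omega)
        have h5 := f_mono hf (2*m+2)
        rw [show 2*m+2+1 = 2*m+3 from rfl] at h5
        omega
      · have hprev : a (2*m+1) = 0 := by
          have := g2 (2*m+1); rw [h] at this; omega
        have hprev2 : a (2*m) = 0 := by
          have := g3 (2*m) ⟨m, by omega⟩; rw [h] at this; omega
        rw [Finset.sum_range_succ, Finset.sum_range_succ, hprev, hprev2]
        have := ih (2*m) (by omega)
        rw [h3 m]
        omega

end Aux
section Aux2
variable {f : ℕ → ℕ}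

lemma good_of_le (a a' : ℕ → ℕ) (h : ∀ i, a' i ≤ a i) (ha : GoodDigits a) :
    GoodDigits a' := by
  obtain ⟨g1, g2, g3⟩ := ha
  refine ⟨fun i => le_trans (h i) (g1 i), fun i => ?_, fun i hi => ?_⟩
  · have := Nat.mul_le_mul (h i) (h (i+1)); rw [g2 i] at this; omega
  · have := Nat.mul_le_mul (h i) (h (i+2)); rw [g3 i hi] at this; omega

lemma sum_ext (a : ℕ → ℕ) (N r : ℕ) (h : N ≤ r) (hs : ∀ i, N ≤ i → a i = 0) :
    ∑ i ∈ Finset.range r, a i * f i = ∑ i ∈ Finset.range N, a i * f i :=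
  (Finset.sum_subset (Finset.range_subset_range.2 h) (fun x _ hx => by
     rw [hs x (by simpa using hx)]; ring)).symm

/-- adding a top digit 1 at position `p ≥ supp bound + 1` to a good digit string -/
lemma exists_rep (hf : IsFSeq f) : ∀ r, ∀ n, n < f r →
    ∃ a, GoodDigits a ∧ (∀ i, r ≤ i → a i = 0) ∧
      n = ∑ i ∈ Finset.range r, a i * f i := by
  obtain ⟨h0, h1, h2, h3⟩ := id hf
  intro r
  induction r using Nat.strong_induction_on with
  | _ r ih =>
    intro n hn
    rcases cases4 r with rfl | rfl | ⟨m, rfl⟩ | ⟨m, rfl⟩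
    · have hn0 : n = 0 := by omega
      exact ⟨fun _ => 0, ⟨fun i => by norm_num, fun i => by norm_num, fun i _ => by norm_num⟩,
        fun i _ => rfl, by simp [hn0]⟩
    · refine ⟨fun i => if i = 0 then n else 0, ⟨?_, ?_, ?_⟩, ?_, ?_⟩
      · intro i; dsimp only; split <;> omega
      · intro i; dsimp only; rw [if_neg (by omega : ¬ i + 1 = 0), mul_zero]
      · intro i _; dsimp only; rw [if_neg (by omega : ¬ i + 2 = 0), mul_zero]
      · intro i hi; dsimp only; rw [if_neg (by omega)]
      · rw [Finset.sum_range_one]; simp [h0]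
    · -- r = 2m+2
      by_cases hcase : n < f (2*m+1)
      · obtain ⟨b, hbg, hbs, hbsum⟩ := ih (2*m+1) (by omega) n hcase
        refine ⟨b, hbg, fun i hi => hbs i (by omega), ?_⟩
        rw [Finset.sum_range_succ, hbs (2*m+1) le_rfl]
        simpa using hbsum
      · have hfr : f (2*m+2) = f (2*m) + f (2*m+1) := h2 m
        have hlt : n - f (2*m+1) < f (2*m) := by omega
        obtain ⟨b, ⟨gb1, gb2, gb3⟩, hbs, hbsum⟩ := ih (2*m) (by omega) _ hlt
        set aa : ℕ → ℕ := fun i => if i = 2*m+1 then 1 else b i with haa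
        have A1 : ∀ i, aa i ≤ 1 := by
          intro i; rw [haa]; dsimp only; split
          · omega
          · exact gb1 i
        have A2 : ∀ i, aa i * aa (i+1) = 0 := by
          intro i; rw [haa]; dsimp only
          by_cases h : i = 2*m+1
          · rw [if_neg (by omega : ¬ i + 1 = 2*m+1), hbs (i+1) (by omega), mul_zero]
          · rw [if_neg h]
            by_cases h' : i + 1 = 2*m+1
            · rw [hbs i (by omega), zero_mul]
            · rw [if_neg h']; exact gb2 i
        have A3 : ∀ i, Even i → aa i * aa (i+2) = 0 := by
          intro i hi
          obtain ⟨t, rfl⟩ := hi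
          rw [haa]; dsimp only
          rw [if_neg (by omega : ¬ t + t = 2*m+1), if_neg (by omega : ¬ t + t + 2 = 2*m+1)]
          exact gb3 _ ⟨t, rfl⟩
        have A4 : ∀ i, 2*m+2 ≤ i → aa i = 0 := by
          intro i hi; rw [haa]; dsimp only; rw [if_neg (by omega), hbs i (by omega)]
        refine ⟨aa, ⟨A1, A2, A3⟩, A4, ?_⟩
        rw [Finset.sum_range_succ, Finset.sum_range_succ]
        have e1 : aa (2*m+1) = 1 := by rw [haa]; dsimp only; rw [if_pos rfl]
        have e2 : aa (2*m) = 0 := by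
          rw [haa]; dsimp only; rw [if_neg (by omega : ¬ 2*m = 2*m+1), hbs (2*m) le_rfl]
        have e3 : ∑ i ∈ Finset.range (2*m), aa i * f i
            = ∑ i ∈ Finset.range (2*m), b i * f i := by
          refine Finset.sum_congr rfl fun x hx => ?_
          rw [haa]; dsimp only; rw [if_neg (by simp at hx; omega)]
        rw [e1, e2, e3, ← hbsum]; omega
    · -- r = 2m+3
      by_cases hcase : n < f (2*m+2)
      · obtain ⟨b, hbg, hbs, hbsum⟩ := ih (2*m+2) (by omega) n hcase
        refine ⟨b, hbg, fun i hi => hbs i (by omega), ?_⟩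
        rw [Finset.sum_range_succ, hbs (2*m+2) le_rfl]
        simpa using hbsum
      · have hfr : f (2*m+3) = f (2*m) + f (2*m+2) := h3 m
        have hlt : n - f (2*m+2) < f (2*m) := by omega
        obtain ⟨b, ⟨gb1, gb2, gb3⟩, hbs, hbsum⟩ := ih (2*m) (by omega) _ hlt
        set aa : ℕ → ℕ := fun i => if i = 2*m+2 then 1 else b i with haa
        have A1 : ∀ i, aa i ≤ 1 := by
          intro i; rw [haa]; dsimp only; split
          · omega
          · exact gb1 i
        have A2 : ∀ i, aa i * aa (i+1) = 0 := by
          intro i; rw [haa]; dsimp only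
          by_cases h : i = 2*m+2
          · rw [if_neg (by omega : ¬ i + 1 = 2*m+2), hbs (i+1) (by omega), mul_zero]
          · rw [if_neg h]
            by_cases h' : i + 1 = 2*m+2
            · rw [hbs i (by omega), zero_mul]
            · rw [if_neg h']; exact gb2 i
        have A3 : ∀ i, Even i → aa i * aa (i+2) = 0 := by
          intro i hi; rw [haa]; dsimp only
          by_cases h : i = 2*m+2
          · rw [if_neg (by omega : ¬ i + 2 = 2*m+2), hbs (i+2) (by omega), mul_zero]
          · rw [if_neg h]
            by_cases h' : i + 2 = 2*m+2
            · rw [hbs i (by omega), zero_mul]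
            · rw [if_neg h']; exact gb3 i hi
        have A4 : ∀ i, 2*m+3 ≤ i → aa i = 0 := by
          intro i hi; rw [haa]; dsimp only; rw [if_neg (by omega), hbs i (by omega)]
        refine ⟨aa, ⟨A1, A2, A3⟩, A4, ?_⟩
        rw [Finset.sum_range_succ, Finset.sum_range_succ, Finset.sum_range_succ]
        have e1 : aa (2*m+2) = 1 := by rw [haa]; dsimp only; rw [if_pos rfl]
        have e2 : aa (2*m) = 0 := by
          rw [haa]; dsimp only; rw [if_neg (by omega : ¬ 2*m = 2*m+2), hbs (2*m) le_rfl]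
        have e2' : aa (2*m+1) = 0 := by
          rw [haa]; dsimp only
          rw [if_neg (by omega : ¬ 2*m+1 = 2*m+2), hbs (2*m+1) (by omega)]
        have e3 : ∑ i ∈ Finset.range (2*m), aa i * f i
            = ∑ i ∈ Finset.range (2*m), b i * f i := by
          refine Finset.sum_congr rfl fun x hx => ?_
          rw [haa]; dsimp only; rw [if_neg (by simp at hx; omega)]
        rw [e1, e2, e2', e3, ← hbsum]; omega

lemma unique_rep (hf : IsFSeq f) : ∀ r, ∀ a b : ℕ → ℕ, GoodDigits a → GoodDigits b →
    (∀ i, r ≤ i → a i = 0) → (∀ i, r ≤ i → b i = 0) →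
    (∑ i ∈ Finset.range r, a i * f i) = (∑ i ∈ Finset.range r, b i * f i) →
    ∀ i, a i = b i := by
  intro r
  induction r with
  | zero => intro a b _ _ hsa hsb _ i; rw [hsa i (by omega), hsb i (by omega)]
  | succ r ih =>
    intro a b ha hb hsa hsb hsum i
    have bda := sum_lt hf a ha r
    have bdb := sum_lt hf b hb r
    rw [Finset.sum_range_succ, Finset.sum_range_succ] at hsum
    have ha1 := ha.1 r
    have hb1 := hb.1 r
    have htop : a r = b r := by
      interval_cases h : a r <;> interval_cases h' : b r <;> omega
    have hsum' : ∑ i ∈ Finset.range r, a i * f i = ∑ i ∈ Finset.range r, b i * f i := by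
      rw [htop] at hsum; omega
    have hga : GoodDigits (fun i => if i = r then 0 else a i) :=
      good_of_le a _ (fun i => by split <;> omega) ha
    have hgb : GoodDigits (fun i => if i = r then 0 else b i) :=
      good_of_le b _ (fun i => by split <;> omega) hb
    have hsa' : ∀ i, r ≤ i → (fun i => if i = r then 0 else a i) i = 0 := by
      intro i hi; dsimp only; split
      · rfl
      · exact hsa i (by omega)
    have hsb' : ∀ i, r ≤ i → (fun i => if i = r then 0 else b i) i = 0 := by
      intro i hi; dsimp only; split
      · rfl
      · exact hsb i (by omega)
    have e1 : ∑ i ∈ Finset.range r, (if i = r then 0 else a i) * f i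
        = ∑ i ∈ Finset.range r, a i * f i :=
      Finset.sum_congr rfl fun x hx => by rw [if_neg (by simp at hx; omega)]
    have e2 : ∑ i ∈ Finset.range r, (if i = r then 0 else b i) * f i
        = ∑ i ∈ Finset.range r, b i * f i :=
      Finset.sum_congr rfl fun x hx => by rw [if_neg (by simp at hx; omega)]
    have key := ih (fun i => if i = r then 0 else a i) (fun i => if i = r then 0 else b i)
      hga hgb hsa' hsb' (by rw [e1, e2]; exact hsum')
    by_cases h : i = r
    · rw [h]; exact htop
    · have := key i
      simp only [if_neg h] at this
      exact this

end Aux2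


theorem f_representation_exists_unique (f : ℕ → ℕ) (hf : IsFSeq f) (n : ℕ) :
    ∃! a : ℕ → ℕ, IsFRep f n a := by
  obtain ⟨a, hag, has, hasum⟩ := exists_rep hf n n (f_lb hf n)
  refine ⟨a, ⟨hag.1, hag.2.1, hag.2.2, n, has, hasum⟩, ?_⟩
  intro b hb
  obtain ⟨hb1, hb2, hb3, Nb, hbs, hbsum⟩ := hb
  funext i
  set r := max Nb n with hr
  have hsb : ∑ i ∈ Finset.range r, b i * f i = n := by
    rw [sum_ext b Nb r (le_max_left _ _) hbs]; omega
  have hsa : ∑ i ∈ Finset.range r, a i * f i = n := by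
    rw [sum_ext a n r (le_max_right _ _) has]; omega
  exact unique_rep hf r b a ⟨hb1, hb2, hb3⟩ hag
    (fun i hi => hbs i (le_trans (le_max_left _ _) hi))
    (fun i hi => has i (le_trans (le_max_right _ _) hi))
    (by rw [hsa, hsb]) i
end

section
/- For every integer n ≥ 0, s_n = 0 if and only if a_0(n) = 1, where (a_i(n))_{i≥0} is the f-representation of n. -/
lemma T_append (l l' : List ℕ) :
    ((l ++ l').map tau).flatten = (l.map tau).flatten ++ (l'.map tau).flatten := by
  simp

lemma tauIter_decomp : ∀ k, tauIter (k+2) = tauIter (k+1) ++ tauIter k ++ tauIter (k+1) := by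
  intro k
  induction k with
  | zero => rfl
  | succ k ih =>
    show ((tauIter (k+2)).map tau).flatten = _
    conv_lhs => rw [ih]
    rw [T_append, T_append]
    rfl

section
variable {f : ℕ → ℕ} (hf : IsFSeq f)
include hf

lemma f_mono_s1 : Monotone f := by
  apply monotone_nat_of_le_succ
  intro n
  rcases Nat.even_or_odd n with ⟨m, hm⟩ | ⟨m, hm⟩
  · match m, hm with
    | 0, hm =>
      subst hm
      have h0 := hf.1
      have h1 := hf.2.1
      have e : f (0+0) = f 0 := congrArg f (by omega)
      have e' : f (0+0+1) = f 1 := congrArg f (by omega)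
      omega
    | (j+1), hm =>
      subst hm
      have h := hf.2.2.2 j
      have e : f ((j+1)+(j+1)) = f (2*j+2) := congrArg f (by omega)
      have e' : f ((j+1)+(j+1)+1) = f (2*j+3) := congrArg f (by omega)
      omega
  · subst hm
    have h := hf.2.2.1 m
    have e : f (2*m+1+1) = f (2*m+2) := congrArg f (by omega)
    omega

lemma f_pos_s1 (n : ℕ) : 1 ≤ f n := by
  have h := f_mono_s1 hf (Nat.zero_le n)
  have := hf.1
  omega

lemma len_tauIter : ∀ k, (tauIter k).length = f (2*k) := by
  have key : ∀ k, (tauIter k).length = f (2*k) ∧ (tauIter (k+1)).length = f (2*k+2) := by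
    intro k
    induction k with
    | zero =>
      have h0 := hf.1
      have h1 := hf.2.1
      have h2 := hf.2.2.1 0
      have e : f (2*0) = f 0 := congrArg f (by omega)
      have e2 : f (2*0+2) = f 2 := congrArg f (by omega)
      have e3 : f (2*0+1) = f 1 := congrArg f (by omega)
      constructor
      · show (1 : ℕ) = f (2*0); omega
      · show (3 : ℕ) = f (2*0+2); omega
    | succ k ih =>
      have e0 : f (2*(k+1)) = f (2*k+2) := congrArg f (by omega)
      refine ⟨by rw [e0]; exact ih.2, ?_⟩
      have hlen : (tauIter (k+2)).length
          = (tauIter (k+1)).length + (tauIter k).length + (tauIter (k+1)).length := by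
        rw [tauIter_decomp k]; simp; omega
      have h1 := hf.2.2.1 (k+1)
      have h2 := hf.2.2.2 k
      have e1 : f (2*(k+1)+2) = f (2*k+4) := congrArg f (by omega)
      have e2 : f (2*(k+1)+1) = f (2*k+3) := congrArg f (by omega)
      have e3 : f (2*(k+1)) = f (2*k+2) := congrArg f (by omega)
      show (tauIter (k+2)).length = f (2*(k+1)+2)
      rw [hlen, ih.1, ih.2]
      omega
  exact fun k => (key k).1

lemma sum_lt_s1 (b : ℕ → ℕ) (hb1 : ∀ i, b i ≤ 1)
    (hb2 : ∀ i, b i * b (i+1) = 0) (hb3 : ∀ i, Even i → b i * b (i+2) = 0) :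
    ∀ m, ∑ i ∈ Finset.range m, b i * f i < f m := by
  intro m
  induction m using Nat.strong_induction_on with
  | _ m ih =>
    match m with
    | 0 => simp [hf.1]
    | 1 =>
      have := hb1 0
      have h0 := hf.1
      have h1 := hf.2.1
      simp only [Finset.sum_range_one]
      nlinarith
    | (m'+2) =>
      by_cases hbm : b (m'+1) = 0
      · rw [Finset.sum_range_succ, hbm]
        have h1 := ih (m'+1) (by omega)
        have h2 := f_mono_s1 hf (show m'+1 ≤ m'+2 by omega)
        omega
      · have hbm1 : b (m'+1) = 1 := by have := hb1 (m'+1); omega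
        have hprev : b m' = 0 := by
          have := hb2 m'
          rw [hbm1] at this
          omega
        rw [Finset.sum_range_succ, Finset.sum_range_succ, hprev, hbm1]
        rcases Nat.even_or_odd (m'+1) with ⟨j, hj⟩ | ⟨j, hj⟩
        · obtain ⟨J, hJ⟩ : ∃ J, m' = 2*J+1 := ⟨j-1, by omega⟩
          have hgap : b (2*J) = 0 := by
            have h := hb3 (2*J) (even_two_mul _)
            have e : 2*J+2 = m'+1 := by omega
            rw [e, hbm1] at h
            omega
          have hsum : ∑ i ∈ Finset.range m', b i * f i
              = ∑ i ∈ Finset.range (2*J), b i * f i := by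
            rw [hJ, Finset.sum_range_succ, hgap]
            simp
          have hih := ih (2*J) (by omega)
          have hrec := hf.2.2.2 J
          have e1 : f (m'+1) = f (2*J+2) := congrArg f (by omega)
          have e2 : f (m'+2) = f (2*J+3) := congrArg f (by omega)
          rw [hsum, e1, e2]
          omega
        · have hm' : m' = 2*j := by omega
          have hih := ih (2*j) (by omega)
          have hrec := hf.2.2.1 j
          have hsum : ∑ i ∈ Finset.range m', b i * f i
              = ∑ i ∈ Finset.range (2*j), b i * f i := by rw [hm']
          have e1 : f (m'+1) = f (2*j+1) := congrArg f (by omega)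
          have e2 : f (m'+2) = f (2*j+2) := congrArg f (by omega)
          rw [hsum, e1, e2]
          omega
end

section
variable {s : ℕ → ℕ} (hs : IsFixedSeq s)
include hs

lemma s_vals : s 0 = 1 ∧ s 1 = 0 ∧ s 2 = 1 := by
  have e : tauIter 1 = [1,0,1] := rfl
  have h0 := hs 1 0 (by rw [e]; norm_num)
  have h1 := hs 1 1 (by rw [e]; norm_num)
  have h2 := hs 1 2 (by rw [e]; norm_num)
  rw [e] at h0 h1 h2
  refine ⟨?_, ?_, ?_⟩ <;> simp_all

lemma s_mid (k j : ℕ) (hj : j < (tauIter k).length) :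
    s ((tauIter (k+1)).length + j) = s j := by
  have hd := tauIter_decomp k
  have hlen : (tauIter (k+2)).length
      = (tauIter (k+1)).length + (tauIter k).length + (tauIter (k+1)).length := by
    rw [hd]; simp; omega
  set A := tauIter (k+1)
  set B := tauIter k
  have h := hs (k+2) (A.length + j) (by omega)
  rw [hd] at h
  rw [List.getD_append _ _ _ _ (by simp; omega), List.getD_append_right _ _ _ _ (by omega)] at h
  simp only [Nat.add_sub_cancel_left] at h
  rw [h, hs k j hj]

lemma s_right (k j : ℕ) (hj : j < (tauIter (k+1)).length) :
    s ((tauIter (k+1)).length + (tauIter k).length + j) = s j := by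
  have hd := tauIter_decomp k
  have hlen : (tauIter (k+2)).length
      = (tauIter (k+1)).length + (tauIter k).length + (tauIter (k+1)).length := by
    rw [hd]; simp; omega
  set A := tauIter (k+1)
  set B := tauIter k
  have h := hs (k+2) (A.length + B.length + j) (by omega)
  rw [hd] at h
  rw [List.getD_append_right _ _ _ _ (by simp)] at h
  have e : A.length + B.length + j - (A ++ B).length = j := by simp
  rw [e] at h
  rw [h, hs (k+1) j hj]
end

lemma key_lemma {f s : ℕ → ℕ} (hf : IsFSeq f) (hs : IsFixedSeq s) :
    ∀ n b, IsFRep f n b → (s n = 0 ↔ b 0 = 1) := by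
  intro n
  induction n using Nat.strong_induction_on with
  | _ n ih =>
    rintro b ⟨hb1, hb2, hb3, N, hN, hsum⟩
    by_cases hz : ∀ i, b i = 0
    · have hn0 : n = 0 := by
        rw [hsum]
        exact Finset.sum_eq_zero fun i _ => by rw [hz i, zero_mul]
      rw [hn0, (s_vals hs).1, hz 0]
      constructor <;> omega
    · push_neg at hz
      obtain ⟨i0, hi0⟩ := hz
      have hi01 : b i0 = 1 := by have := hb1 i0; omega
      have hi0N : i0 < N := by
        by_contra h
        exact hi0 (hN i0 (by omega))
      set m := Nat.findGreatest (fun i => b i = 1) N with hm_def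
      have hm : b m = 1 :=
        Nat.findGreatest_spec (P := fun i => b i = 1) (le_of_lt hi0N) hi01
      have hmN : m < N := by
        have hle : m ≤ N := Nat.findGreatest_le N
        rcases lt_or_eq_of_le hle with h | h
        · exact h
        · exact absurd hm (by rw [h]; simp [hN N le_rfl])
      have hhigh : ∀ k, m < k → b k = 0 := by
        intro k hk
        by_cases hkN : k ≤ N
        · have := Nat.findGreatest_is_greatest (n := N) (P := fun i => b i = 1) hk hkN
          have := hb1 k
          omega
        · exact hN k (by omega)
      have hsum' : n = ∑ i ∈ Finset.range (m+1), b i * f i := by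
        rw [hsum]
        exact (Finset.sum_subset (Finset.range_subset_range.2 (by omega))
          (fun x _ hx => by rw [hhigh x (by simpa using hx), zero_mul])).symm
      have hn : n = (∑ i ∈ Finset.range m, b i * f i) + f m := by
        rw [hsum', Finset.sum_range_succ, hm, one_mul]
      set r := ∑ i ∈ Finset.range m, b i * f i with hr_def
      -- the truncated representation
      set b' : ℕ → ℕ := fun i => if i < m then b i else 0 with hb'_def
      have hb'rep : IsFRep f r b' := by
        refine ⟨fun i => ?_, fun i => ?_, fun i _ => ?_, m, fun i hi => ?_, ?_⟩
        · by_cases h : i < m <;> simp [hb'_def, h, hb1 i]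
        · by_cases h : i + 1 < m
          · simp only [hb'_def, if_pos h, if_pos (by omega : i < m)]; exact hb2 i
          · simp [hb'_def, h]
        · by_cases h : i + 2 < m
          · simp only [hb'_def, if_pos h, if_pos (by omega : i < m)]
            exact hb3 i (by assumption)
          · simp [hb'_def, h]
        · simp only [hb'_def]
          rw [if_neg (by omega)]
        · rw [hr_def]
          exact Finset.sum_congr rfl fun x hx => by
            simp only [hb'_def]
            rw [if_pos (Finset.mem_range.1 hx)]
      have hb'0 : 1 ≤ m → b' 0 = b 0 := fun h => by simp only [hb'_def]; rw [if_pos (by omega : 0 < m)]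
      have hfm1 : 1 ≤ f m := f_pos_s1 hf m
      have hrn : r < n := by omega
      -- case analysis on m
      rcases Nat.even_or_odd m with ⟨k, hk⟩ | ⟨k, hk⟩
      · match k, hk with
        | 0, hk =>
          -- m = 0 : n = f 0 = 1
          have hm0 : m = 0 := by omega
          have hn1 : n = 1 := by
            rw [hn, hm0, hf.1]
            simp [hr_def, hm0]
          rw [hn1, (s_vals hs).2.1]
          simp [hm0 ▸ hm]
        | (k'+1), hk =>
          -- m = 2k'+2
          have hmk : m = 2*k'+2 := by omega
          have hodd0 : b (2*k'+1) = 0 := by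
            have h := hb2 (2*k'+1)
            rw [show 2*k'+1+1 = m by omega, hm] at h
            omega
          have heven0 : b (2*k') = 0 := by
            have h := hb3 (2*k') (even_two_mul _)
            rw [show 2*k'+2 = m by omega, hm] at h
            omega
          have hr2 : r = ∑ i ∈ Finset.range (2*k'), b i * f i := by
            rw [hr_def, hmk, Finset.sum_range_succ, Finset.sum_range_succ, hodd0, heven0]
            simp
          have hrlt : r < f (2*k') := hr2 ▸ sum_lt_s1 hf b hb1 hb2 hb3 (2*k')
          have hL0 : (tauIter k').length = f (2*k') := len_tauIter hf k'
          have hL1 : (tauIter (k'+1)).length = f m := by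
            rw [len_tauIter hf (k'+1)]
            exact congrArg f (by omega)
          have hnsplit : n = (tauIter (k'+1)).length + r := by omega
          have hsn : s n = s r := by
            rw [hnsplit]
            exact s_mid hs k' r (by omega)
          rw [hsn, ih r hrn b' hb'rep, hb'0 (by omega)]
      · match k, hk with
        | 0, hk =>
          -- m = 1 : n = f 1 = 2, b 0 = 0
          have hm1 : m = 1 := by omega
          have hb00 : b 0 = 0 := by
            have h := hb2 0
            rw [show (0:ℕ)+1 = m by omega, hm] at h
            omega
          have hn2 : n = 2 := by
            rw [hn, hm1, hf.2.1]
            simp [hr_def, hm1, hb00]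
          rw [hn2, (s_vals hs).2.2, hb00]
          constructor <;> omega
        | (k'+1), hk =>
          -- m = 2k'+3
          have hmk : m = 2*k'+3 := by omega
          have heven0 : b (2*k'+2) = 0 := by
            have h := hb2 (2*k'+2)
            rw [show 2*k'+2+1 = m by omega, hm] at h
            omega
          have hr2 : r = ∑ i ∈ Finset.range (2*k'+2), b i * f i := by
            rw [hr_def, hmk, Finset.sum_range_succ, heven0]
            simp
          have hrlt : r < f (2*k'+2) := hr2 ▸ sum_lt_s1 hf b hb1 hb2 hb3 (2*k'+2)
          have hL0 : (tauIter k').length = f (2*k') := len_tauIter hf k'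
          have hL1 : (tauIter (k'+1)).length = f (2*k'+2) := by
            rw [len_tauIter hf (k'+1)]
            exact congrArg f (by omega)
          have hrec : f m = f (2*k') + f (2*k'+2) := by
            rw [show m = 2*k'+3 from hmk]
            exact hf.2.2.2 k'
          have hnsplit : n = (tauIter (k'+1)).length + (tauIter k').length + r := by omega
          have hsn : s n = s r := by
            rw [hnsplit]
            exact s_right hs k' r (by omega)
          rw [hsn, ih r hrn b' hb'rep, hb'0 (by omega)]


theorem zero_iff_digit_one (f : ℕ → ℕ) (hf : IsFSeq f) (s : ℕ → ℕ) (hs : IsFixedSeq s) (a : ℕ → ℕ → ℕ) (ha : ∀ n, IsFRep f n (a n)) :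
    ∀ n : ℕ, s n = 0 ↔ a n 0 = 1 := by
  intro n
  exact key_lemma hf hs n (a n) (ha n)
end

section
/- For all integers n ≥ 0 and k ≥ 1: s_{n+f_{2k+1}} ≠ s_n if and only if Φ_k(n) ∈ {f_{2k+3}/2, f_{2k+3}/2 − 1, f_{2k+3}/2 + f_{2k}, f_{2k+3}/2 + f_{2k} − 1}. -/
/-!
Write `W m = τ^m(1)`. Then `|W m| = f (2m)`, `W (m+2) = W (m+1) W m W (m+1)`, and `s` begins with
every `W m`. The words `W m W (m+1)` and `W (m+1) W m` differ exactly at the positions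
`f (2m+3) / 2 - 1` and `f (2m+3) / 2`. With `A = W (k-1)` and `B = W k`, the prefix of `s` of length
`f (2k+3)` is `BABB`, while its shift by `f (2k+1) = |AB|` begins with `BBBA`; comparing both with
`BBAB` shows that they differ exactly at the four positions of the theorem.

The same comparison for shifts by `f (2m+1)` and `f (2m+2)` gives `s (y + f t) = s y` whenever
`t ∈ {2m+1, 2m+2}`, `t ≥ 3` and `y + 1 < f (2m+3) / 2`. Below a top digit `f t` of an
f-representation the remaining digits sum to less than `f (2m)`, so removing every digit `f t` with
`t ≥ 2k+3` changes neither `s n` nor `s (n + f (2k+1))`: only `Φ_k(n)` matters.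
-/

open Finset

variable {f s b : ℕ → ℕ}

namespace IsFSeq

theorem even_add_two (hf : IsFSeq f) (m : ℕ) : f (2 * m + 2) = f (2 * m) + f (2 * m + 1) :=
  hf.2.2.1 m

theorem odd_add_two (hf : IsFSeq f) (m : ℕ) : f (2 * m + 3) = f (2 * m) + f (2 * m + 2) :=
  hf.2.2.2 m

theorem pos_even_and_even_lt_odd (hf : IsFSeq f) (m : ℕ) :
    0 < f (2 * m) ∧ f (2 * m) < f (2 * m + 1) := by
  induction m with
  | zero => simp [hf.1, hf.2.1]
  | succ m ih =>
    rw [show 2 * (m + 1) = 2 * m + 2 by ring, hf.odd_add_two, hf.even_add_two]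
    omega

theorem lt_succ (hf : IsFSeq f) (n : ℕ) : f n < f (n + 1) := by
  obtain ⟨m, rfl | rfl⟩ := Nat.even_or_odd' n
  · exact (hf.pos_even_and_even_lt_odd m).2
  · rw [hf.even_add_two]
    exact Nat.lt_add_of_pos_left (hf.pos_even_and_even_lt_odd m).1

theorem strictMono (hf : IsFSeq f) : StrictMono f := strictMono_nat_of_lt_succ hf.lt_succ

theorem two_le_odd (hf : IsFSeq f) (m : ℕ) : 2 ≤ f (2 * m + 1) :=
  hf.2.1 ▸ hf.strictMono.monotone (by omega)

theorem odd_add_two_div_two (hf : IsFSeq f) (m : ℕ) :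
    f (2 * m + 3) / 2 = f (2 * m) + f (2 * m + 1) / 2 := by
  rw [hf.odd_add_two, hf.even_add_two]
  omega

theorem lt_odd_add_two_div_two (hf : IsFSeq f) {k : ℕ} (hk : 1 ≤ k) :
    f (2 * k + 1) < f (2 * k + 3) / 2 := by
  obtain ⟨m, rfl⟩ : ∃ m, k = m + 1 := ⟨k - 1, by omega⟩
  show f (2 * m + 3) < f (2 * m + 5) / 2
  have : f (2 * m + 5) / 2 = f (2 * m + 2) + f (2 * m + 3) / 2 := hf.odd_add_two_div_two (m + 1)
  have := hf.even_add_two m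
  have := hf.odd_add_two m
  have := hf.two_le_odd m
  omega

end IsFSeq

theorem tauIter_add_two (m : ℕ) :
    tauIter (m + 2) = tauIter (m + 1) ++ tauIter m ++ tauIter (m + 1) := by
  induction m with
  | zero => decide
  | succ m ih =>
    change ((tauIter (m + 2)).map tau).flatten = _
    conv_lhs => rw [ih]
    simp only [List.map_append, List.flatten_append]
    rfl

theorem IsFSeq.length_tauIter (hf : IsFSeq f) : ∀ m, (tauIter m).length = f (2 * m)
  | 0 => by simp [tauIter, hf.1]
  | 1 => by simp [tauIter, tau, hf.even_add_two 0, hf.1, hf.2.1]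
  | m + 2 => by
    rw [tauIter_add_two, List.length_append, List.length_append, hf.length_tauIter (m + 1),
      hf.length_tauIter m, show 2 * (m + 2) = 2 * (m + 1) + 2 by ring, hf.even_add_two,
      show 2 * (m + 1) + 1 = 2 * m + 3 by ring, hf.odd_add_two]
    ring_nf

theorem IsFSeq.length_tauIter_succ (hf : IsFSeq f) (m : ℕ) :
    (tauIter (m + 1)).length = f (2 * m + 2) :=
  hf.length_tauIter (m + 1)

namespace List

variable {α : Type*} {p : ℕ} {d : α}

theorem getD_append_ne_iff (u x y : List α) :
    (u ++ x).getD p d ≠ (u ++ y).getD p d ↔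
      u.length ≤ p ∧ x.getD (p - u.length) d ≠ y.getD (p - u.length) d := by
  rcases lt_or_ge p u.length with hp | hp
  · rw [getD_append _ _ _ _ hp, getD_append _ _ _ _ hp]
    simp [hp]
  · rw [getD_append_right _ _ _ _ hp, getD_append_right _ _ _ _ hp]
    simp [hp]

theorem getD_append_right_ne_iff {x y : List α} (v : List α) (h : x.length = y.length) :
    (x ++ v).getD p d ≠ (y ++ v).getD p d ↔ x.getD p d ≠ y.getD p d := by
  rcases lt_or_ge p x.length with hp | hp
  · rw [getD_append _ _ _ _ hp, getD_append _ _ _ _ (h ▸ hp)]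
  · rw [getD_append_right _ _ _ _ hp, getD_append_right _ _ _ _ (h ▸ hp), h,
      getD_eq_default x d hp, getD_eq_default y d (h ▸ hp)]
    simp

end List

theorem ne_iff_or_of_ne_iff {α : Type*} {a b c : α} {P Q : Prop} (hab : a ≠ b ↔ P)
    (hbc : b ≠ c ↔ Q) (hPQ : ¬(P ∧ Q)) : a ≠ c ↔ P ∨ Q := by
  grind

theorem IsFSeq.tauIter_append_getD_ne_iff (hf : IsFSeq f) (m p : ℕ) :
    (tauIter m ++ tauIter (m + 1)).getD p 0 ≠ (tauIter (m + 1) ++ tauIter m).getD p 0 ↔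
      p = f (2 * m + 3) / 2 ∨ p = f (2 * m + 3) / 2 - 1 := by
  induction m generalizing p with
  | zero =>
    rw [show f 3 = 4 by rw [hf.odd_add_two 0, hf.even_add_two 0, hf.1, hf.2.1]]
    match p with
    | 0 | 1 | 2 | 3 => decide
    | p + 4 => simp [tauIter, tau]
  | succ m ih =>
    have hsucc : tauIter (m + 1 + 1) = tauIter (m + 1) ++ tauIter m ++ tauIter (m + 1) :=
      tauIter_add_two m
    rw [hsucc, ← List.append_assoc, List.append_assoc _ (tauIter m),
      List.getD_append_right_ne_iff _ (by simp [add_comm]),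
      List.getD_append_ne_iff, ne_comm, ih, hf.length_tauIter]
    have : f (2 * (m + 1) + 3) / 2 = f (2 * (m + 1)) + f (2 * m + 3) / 2 :=
      hf.odd_add_two_div_two (m + 1)
    have : 2 ≤ f (2 * m + 3) := hf.two_le_odd (m + 1)
    omega

namespace IsFixedSeq

theorem eq_getD_of_prefix (hs : IsFixedSeq s) {u : List ℕ} {m p : ℕ} (hu : u <+: tauIter m)
    (hp : p < u.length) : s p = u.getD p 0 := by
  obtain ⟨t, ht⟩ := hu
  rw [hs m p (by rw [← ht, List.length_append]; omega), ← ht, List.getD_append _ _ _ _ hp]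

theorem add_eq_getD_of_prefix (hs : IsFixedSeq s) {u v : List ℕ} {m p : ℕ}
    (h : u ++ v <+: tauIter m) (hp : p < v.length) : s (u.length + p) = v.getD p 0 := by
  rw [hs.eq_getD_of_prefix h (by rw [List.length_append]; omega),
    List.getD_append_right _ _ _ _ (by omega), Nat.add_sub_cancel_left]

theorem shift_even_ne_iff (hf : IsFSeq f) (hs : IsFixedSeq s) {m x : ℕ}
    (hx : x < f (2 * m + 3)) :
    s (x + f (2 * m + 2)) ≠ s x ↔ x = f (2 * m + 3) / 2 ∨ x = f (2 * m + 3) / 2 - 1 := by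
  have hlen : (tauIter m ++ tauIter (m + 1)).length = f (2 * m + 3) := by
    rw [List.length_append, hf.length_tauIter, hf.length_tauIter_succ, hf.odd_add_two]
  have hshift : s (x + f (2 * m + 2)) = (tauIter m ++ tauIter (m + 1)).getD x 0 := by
    rw [add_comm, ← hf.length_tauIter_succ]
    exact hs.add_eq_getD_of_prefix (by rw [tauIter_add_two, List.append_assoc]) (hlen ▸ hx)
  have hbase : s x = (tauIter (m + 1) ++ tauIter m).getD x 0 :=
    hs.eq_getD_of_prefix (by rw [tauIter_add_two]; exact List.prefix_append _ _)
      (by rw [List.length_append, add_comm, ← List.length_append, hlen]; exact hx)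
  rw [hshift, hbase, hf.tauIter_append_getD_ne_iff]

theorem shift_odd_ne_iff (hf : IsFSeq f) (hs : IsFixedSeq s) {k x : ℕ} (hk : 1 ≤ k)
    (hx : x < f (2 * k + 3)) :
    s (x + f (2 * k + 1)) ≠ s x ↔
      x = f (2 * k + 3) / 2 ∨ x = f (2 * k + 3) / 2 - 1 ∨
        x = f (2 * k + 3) / 2 + f (2 * k) ∨ x = f (2 * k + 3) / 2 + f (2 * k) - 1 := by
  obtain ⟨m, rfl⟩ : ∃ m, k = m + 1 := ⟨k - 1, by omega⟩
  rw [show 2 * (m + 1) + 1 = 2 * m + 3 by ring, show 2 * (m + 1) + 3 = 2 * m + 5 by ring,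
    show 2 * (m + 1) = 2 * m + 2 by ring] at *
  set A := tauIter m
  set B := tauIter (m + 1)
  have hA : A.length = f (2 * m) := hf.length_tauIter m
  have hB : B.length = f (2 * m + 2) := hf.length_tauIter_succ m
  have hW : tauIter (m + 3) = (B ++ A ++ B ++ B) ++ (B ++ A ++ B) := by
    rw [tauIter_add_two, tauIter_add_two]
  have h5 : f (2 * m + 5) = f (2 * m + 2) + f (2 * m + 4) := hf.odd_add_two (m + 1)
  have h4 : f (2 * m + 4) = f (2 * m + 2) + f (2 * m + 3) := hf.even_add_two (m + 1)
  have h3 := hf.odd_add_two m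
  have hbase : s x = (B ++ A ++ B ++ B).getD x 0 :=
    hs.eq_getD_of_prefix (hW ▸ List.prefix_append _ _) (by simp only [List.length_append]; omega)
  have hshift : s (x + f (2 * m + 3)) = (B ++ B ++ B ++ A).getD x 0 := by
    rw [add_comm, show f (2 * m + 3) = (B ++ A).length by simp [hA, hB, h3, add_comm]]
    exact hs.add_eq_getD_of_prefix (v := B ++ B ++ B ++ A) ⟨B, by rw [hW]; simp⟩
      (by simp only [List.length_append]; omega)
  have hXY (p : ℕ) : (B ++ A ++ B ++ B).getD p 0 ≠ (B ++ B ++ A ++ B).getD p 0 ↔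
      f (2 * m + 2) ≤ p ∧ (p - f (2 * m + 2) = f (2 * m + 3) / 2 ∨
        p - f (2 * m + 2) = f (2 * m + 3) / 2 - 1) := by
    rw [show B ++ A ++ B ++ B = B ++ (A ++ B) ++ B by simp,
      show B ++ B ++ A ++ B = B ++ (B ++ A) ++ B by simp,
      List.getD_append_right_ne_iff _ (by simp [add_comm]), List.getD_append_ne_iff,
      hf.tauIter_append_getD_ne_iff, hB]
  have hYZ (p : ℕ) : (B ++ B ++ A ++ B).getD p 0 ≠ (B ++ B ++ B ++ A).getD p 0 ↔
      f (2 * m + 2) + f (2 * m + 2) ≤ p ∧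
        (p - (f (2 * m + 2) + f (2 * m + 2)) = f (2 * m + 3) / 2 ∨
          p - (f (2 * m + 2) + f (2 * m + 2)) = f (2 * m + 3) / 2 - 1) := by
    rw [show B ++ B ++ A ++ B = B ++ B ++ (A ++ B) by simp,
      show B ++ B ++ B ++ A = B ++ B ++ (B ++ A) by simp, List.getD_append_ne_iff,
      hf.tauIter_append_getD_ne_iff, List.length_append, hB]
  have hQ : f (2 * m + 5) / 2 = f (2 * m + 2) + f (2 * m + 3) / 2 :=
    hf.odd_add_two_div_two (m + 1)
  have : 2 ≤ f (2 * m + 3) := hf.two_le_odd (m + 1)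
  have : 2 ≤ f (2 * m + 2) := (hf.two_le_odd m).trans (hf.lt_succ _).le
  rw [hbase, hshift, ne_comm, ne_iff_or_of_ne_iff (hXY x) (hYZ x) (by omega)]
  omega

theorem shift_even_eq (hf : IsFSeq f) (hs : IsFixedSeq s) {m y : ℕ}
    (hy : y + 1 < f (2 * m + 3) / 2) :
    s (y + f (2 * m + 2)) = s y := by
  by_contra h
  have := (hs.shift_even_ne_iff hf (by omega)).mp h
  omega

theorem shift_odd_eq (hf : IsFSeq f) (hs : IsFixedSeq s) {k y : ℕ} (hk : 1 ≤ k)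
    (hy : y + 1 < f (2 * k + 3) / 2) : s (y + f (2 * k + 1)) = s y := by
  by_contra h
  have := (hs.shift_odd_ne_iff hf hk (by omega)).mp h
  omega

end IsFixedSeq

def IsFDigits (b : ℕ → ℕ) : Prop :=
  (∀ i, b i ≤ 1) ∧ (∀ i, b i * b (i + 1) = 0) ∧ (∀ i, Even i → b i * b (i + 2) = 0)

namespace IsFDigits

theorem eq_zero_or_eq_one (hb : IsFDigits b) (i : ℕ) : b i = 0 ∨ b i = 1 := by
  have := hb.1 i
  omega

theorem sum_range_two_mul_add_one (hb : IsFDigits b) {m : ℕ} (h : b (2 * m + 1) = 1) :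
    ∑ i ∈ range (2 * m + 1), b i * f i = ∑ i ∈ range (2 * m), b i * f i := by
  have h0 : b (2 * m) = 0 := by simpa [h] using hb.2.1 (2 * m)
  rw [sum_range_succ, h0, zero_mul, add_zero]

theorem sum_range_two_mul_add_two (hb : IsFDigits b) {m : ℕ} (h : b (2 * m + 2) = 1) :
    ∑ i ∈ range (2 * m + 2), b i * f i = ∑ i ∈ range (2 * m), b i * f i := by
  have h1 : b (2 * m + 1) = 0 := by simpa [h] using hb.2.1 (2 * m + 1)
  have h0 : b (2 * m) = 0 := by simpa [h] using hb.2.2 (2 * m) (even_two_mul m)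
  rw [sum_range_succ, sum_range_succ, h0, h1, zero_mul, zero_mul, add_zero, add_zero]

end IsFDigits

theorem IsFSeq.sum_range_lt (hf : IsFSeq f) (hb : IsFDigits b) (t : ℕ) :
    ∑ i ∈ range t, b i * f i < f t := by
  induction t using Nat.strong_induction_on with
  | _ t ih =>
  rcases t with _ | t
  · simp [hf.1]
  rw [sum_range_succ]
  rcases hb.eq_zero_or_eq_one t with h | h
  · rw [h, zero_mul, add_zero]
    exact (ih t (by omega)).trans (hf.lt_succ t)
  rw [h, one_mul]
  obtain ⟨m, rfl | rfl⟩ := Nat.even_or_odd' t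
  · rcases m with _ | m
    · simp [hf.1, hf.2.1]
    · show ∑ i ∈ range (2 * m + 2), b i * f i + f (2 * m + 2) < f (2 * m + 3)
      rw [hb.sum_range_two_mul_add_two h, hf.odd_add_two]
      have := ih (2 * m) (by omega)
      omega
  · show ∑ i ∈ range (2 * m + 1), b i * f i + f (2 * m + 1) < f (2 * m + 2)
    rw [hb.sum_range_two_mul_add_one h, hf.even_add_two]
    have := ih (2 * m) (by omega)
    omega

theorem IsFixedSeq.apply_sum_range_add_eq_of_le (hf : IsFSeq f) (hs : IsFixedSeq s)
    (hb : IsFDigits b) {k c N : ℕ} (hc : c < f (2 * k + 3) / 2) (hN : 2 * k + 3 ≤ N) :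
    s (∑ i ∈ range N, b i * f i + c) = s (∑ i ∈ range (2 * k + 3), b i * f i + c) := by
  induction N, hN using Nat.le_induction with
  | base => rfl
  | succ N hN ih =>
    rw [← ih, sum_range_succ]
    rcases hb.eq_zero_or_eq_one N with h | h
    · rw [h, zero_mul, add_zero]
    rw [h, one_mul, add_right_comm]
    have hbound (m : ℕ) (hm : k < m) :
        ∑ i ∈ range (2 * m), b i * f i + c + 1 < f (2 * m + 3) / 2 := by
      have := hf.sum_range_lt hb (2 * m)
      have := hf.odd_add_two_div_two m
      have : f (2 * k + 3) / 2 ≤ f (2 * m + 1) / 2 :=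
        Nat.div_le_div_right (hf.strictMono.monotone (by omega))
      omega
    obtain ⟨m, rfl | rfl⟩ := Nat.even_or_odd' N
    · obtain ⟨m, rfl⟩ : ∃ m', m = m' + 1 := ⟨m - 1, by omega⟩
      show s (∑ i ∈ range (2 * m + 2), b i * f i + c + f (2 * m + 2)) =
        s (∑ i ∈ range (2 * m + 2), b i * f i + c)
      rw [hb.sum_range_two_mul_add_two (m := m) h]
      exact hs.shift_even_eq hf (hbound m (by omega))
    · rw [hb.sum_range_two_mul_add_one h]
      exact hs.shift_odd_eq hf (by omega) (hbound m (by omega))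

theorem shift_odd_neq_iff (f : ℕ → ℕ) (hf : IsFSeq f) (s : ℕ → ℕ) (hs : IsFixedSeq s) (a : ℕ → ℕ → ℕ) (ha : ∀ n, IsFRep f n (a n)) :
    ∀ n k : ℕ, 1 ≤ k →
      (s (n + f (2*k+1)) ≠ s n ↔
        (Phi f a k n = f (2*k+3) / 2 ∨ Phi f a k n = f (2*k+3) / 2 - 1 ∨
         Phi f a k n = f (2*k+3) / 2 + f (2*k) ∨
         Phi f a k n = f (2*k+3) / 2 + f (2*k) - 1)) := by
  intro n k hk
  obtain ⟨h1, h2, h3, N, hN, hn⟩ := ha n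
  have hb : IsFDigits (a n) := ⟨h1, h2, h3⟩
  have hn' : n = ∑ i ∈ range (max N (2 * k + 3)), a n i * f i :=
    hn.trans <| sum_subset (range_subset_range.mpr (le_max_left _ _)) fun i _ hi => by
      rw [hN i (by simpa using hi), zero_mul]
  have hc := hf.lt_odd_add_two_div_two hk
  have hshift := hs.apply_sum_range_add_eq_of_le hf hb hc (le_max_right N (2 * k + 3))
  have hbase :=
    hs.apply_sum_range_add_eq_of_le hf hb ((Nat.zero_le _).trans_lt hc) (le_max_right N (2 * k + 3))
  rw [← hn'] at hshift hbase
  simp only [add_zero] at hbase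
  rw [hshift, hbase]
  exact hs.shift_odd_ne_iff hf hk (hf.sum_range_lt hb _)
end

section
/- For every integer k ≥ 0: s_{f_{2k+1}/2} = 1 if k is odd and s_{f_{2k+1}/2} = 0 if k is even; moreover s_{f_{2k+1}/2 − 1} = 0 if k is odd and s_{f_{2k+1}/2 − 1} = 1 if k is even. -/
def LL (n : ℕ) : ℕ := (tauIter n).length

def mm : ℕ → ℕ
  | 0 => 1
  | k + 1 => LL k + mm k

lemma tau_decomp : ∀ n, tauIter (n+2) = tauIter (n+1) ++ (tauIter n ++ tauIter (n+1)) := by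
  intro n
  induction n with
  | zero => decide
  | succ n ih =>
    have h : tauIter (n+3) = ((tauIter (n+1) ++ (tauIter n ++ tauIter (n+1))).map tau).flatten := by
      rw [← ih]; rfl
    rw [h]
    simp only [List.map_append, List.flatten_append]
    rfl

lemma LL_decomp (n : ℕ) : LL (n+2) = LL (n+1) + (LL n + LL (n+1)) := by
  simp [LL, tau_decomp]

lemma LL0 : LL 0 = 1 := rfl
lemma LL1 : LL 1 = 3 := rfl
lemma LL2 : LL 2 = 7 := by decide

lemma LL_pos : ∀ n, 1 ≤ LL n := by
  intro n
  induction n using Nat.twoStepInduction with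
  | zero => decide
  | one => decide
  | more n ih1 ih2 => rw [LL_decomp]; omega

lemma mm_pos : ∀ k, 1 ≤ mm k := by
  intro k; induction k with
  | zero => decide
  | succ k ih => have := LL_pos k; simp [mm]; omega

lemma mm_lt_LL : ∀ k, mm (k+1) < LL (k+1) := by
  intro k
  induction k with
  | zero => decide
  | succ k ih =>
    have h := LL_decomp k
    have := LL_pos k
    show LL (k+1) + mm (k+1) < LL (k+2)
    omega

lemma LL_succ : ∀ k, LL (k+1) = LL k + 2 * mm k := by
  intro k
  induction k with
  | zero => decide
  | succ k ih =>
    have h := LL_decomp k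
    show LL (k+2) = LL (k+1) + 2 * (LL k + mm k)
    omega

section SeqLemmas
variable (s : ℕ → ℕ)

lemma shift_eq (hs : ∀ n j, j < (tauIter n).length → s j = (tauIter n).getD j 0)
    (k : ℕ) (i : ℕ) (hi : i < LL (k+1)) :
    s (LL (k+2) + LL (k+1) + i) = s i := by
  have e : ∀ n, (tauIter n).length = LL n := fun _ => rfl
  have hd : LL (k+3) = LL (k+2) + (LL (k+1) + LL (k+2)) := LL_decomp (k+1)
  have hd2 : LL (k+2) = LL (k+1) + (LL k + LL (k+1)) := LL_decomp k
  have hlt : LL (k+2) + LL (k+1) + i < (tauIter (k+3)).length := by simp only [e]; omega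
  have hdec : tauIter (k+3) = tauIter (k+2) ++ (tauIter (k+1) ++ tauIter (k+2)) :=
    tau_decomp (k+1)
  rw [hs (k+3) _ hlt, hdec, List.getD_append_right _ _ _ _ (by simp only [e]; omega),
    List.getD_append_right _ _ _ _ (by simp only [e]; omega)]
  rw [show LL (k+2) + LL (k+1) + i - (tauIter (k+2)).length - (tauIter (k+1)).length = i by
    simp only [e]; omega]
  rw [tau_decomp k, List.getD_append _ _ _ _ (by simp only [e]; exact hi)]
  exact (hs (k+1) i (by simp only [e]; exact hi)).symm

lemma key_rec (hs : ∀ n j, j < (tauIter n).length → s j = (tauIter n).getD j 0) (k : ℕ) :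
    s (mm (k+3)) = s (mm (k+1)) ∧ s (mm (k+3) - 1) = s (mm (k+1) - 1) := by
  have h1 : mm (k+1) < LL (k+1) := mm_lt_LL k
  have h2 : 1 ≤ mm (k+1) := mm_pos _
  have e1 : mm (k+3) = LL (k+2) + LL (k+1) + mm (k+1) := by
    rw [show mm (k+3) = LL (k+2) + mm (k+2) from rfl,
      show mm (k+2) = LL (k+1) + mm (k+1) from rfl]; omega
  have e2 : mm (k+3) - 1 = LL (k+2) + LL (k+1) + (mm (k+1) - 1) := by omega
  constructor
  · rw [e1]; exact shift_eq s hs k (mm (k+1)) h1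
  · rw [e2]; exact shift_eq s hs k (mm (k+1) - 1) (by omega)

end SeqLemmas

lemma f_eq_aux (f : ℕ → ℕ)
    (hf : f 0 = 1 ∧ f 1 = 2 ∧ (∀ n, f (2*n+2) = f (2*n) + f (2*n+1)) ∧
      (∀ n, f (2*n+3) = f (2*n) + f (2*n+2))) :
    ∀ k, f (2*k) = LL k ∧ f (2*k+1) = 2 * mm k := by
  obtain ⟨h0, h1, h2, h3⟩ := hf
  intro k
  induction k with
  | zero => simpa using ⟨h0, h1⟩
  | succ k ih =>
    have e2 := h2 k
    have e3 := h3 k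
    have hL := LL_succ k
    refine ⟨?_, ?_⟩
    · rw [show 2*(k+1) = 2*k+2 from by ring]; omega
    · rw [show 2*(k+1)+1 = 2*k+3 from by ring,
        show mm (k+1) = LL k + mm k from rfl]; omega

lemma base_s_vals (s : ℕ → ℕ)
    (hs : ∀ n j, j < (tauIter n).length → s j = (tauIter n).getD j 0) :
    s 0 = 1 ∧ s 1 = 0 ∧ s 2 = 1 ∧ s 4 = 1 ∧ s 5 = 0 := by
  refine ⟨?_, ?_, ?_, ?_, ?_⟩ <;> rw [hs 2 _ (by decide)] <;> decide

lemma main_mm (s : ℕ → ℕ)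
    (hs : ∀ n j, j < (tauIter n).length → s j = (tauIter n).getD j 0) :
    ∀ k, (s (mm k) = if k % 2 = 1 then 1 else 0) ∧
      (s (mm k - 1) = if k % 2 = 1 then 0 else 1) := by
  intro k
  obtain ⟨b0, b1, b2, b4, b5⟩ := base_s_vals s hs
  induction k using Nat.strong_induction_on with
  | _ k ih =>
    match k with
    | 0 => simpa [show mm 0 = 1 from rfl] using ⟨b1, b0⟩
    | 1 => simpa [show mm 1 = 2 by decide] using ⟨b2, b1⟩
    | 2 => simpa [show mm 2 = 5 by decide] using ⟨b5, b4⟩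
    | (k+3) =>
      have kr := key_rec s hs k
      have ihk := ih (k+1) (by omega)
      have hp : (k+3) % 2 = (k+1) % 2 := by omega
      rw [hp, kr.1, kr.2]
      exact ihk

theorem s_at_half_f_odd' (f : ℕ → ℕ)
    (hf : f 0 = 1 ∧ f 1 = 2 ∧ (∀ n, f (2*n+2) = f (2*n) + f (2*n+1)) ∧
      (∀ n, f (2*n+3) = f (2*n) + f (2*n+2)))
    (s : ℕ → ℕ) (hs : ∀ n j, j < (tauIter n).length → s j = (tauIter n).getD j 0) :
    ∀ k : ℕ,
      ((Odd k → s (f (2*k+1) / 2) = 1) ∧ (Even k → s (f (2*k+1) / 2) = 0)) ∧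
      ((Odd k → s (f (2*k+1) / 2 - 1) = 0) ∧ (Even k → s (f (2*k+1) / 2 - 1) = 1)) := by
  intro k
  have hdiv : f (2*k+1) / 2 = mm k := by rw [(f_eq_aux f hf k).2]; omega
  rw [hdiv]
  have h1 := (main_mm s hs k).1
  have h2 := (main_mm s hs k).2
  rcases Nat.even_or_odd k with he | ho
  · have hm : k % 2 = 1 ↔ False := by simp [Nat.even_iff.mp he]
    rw [if_neg (by simp [hm])] at h1 h2
    exact ⟨⟨fun ho' => ((Nat.not_odd_iff_even.mpr he) ho').elim, fun _ => h1⟩,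
      ⟨fun ho' => ((Nat.not_odd_iff_even.mpr he) ho').elim, fun _ => h2⟩⟩
  · rw [if_pos (Nat.odd_iff.mp ho)] at h1 h2
    exact ⟨⟨fun _ => h1, fun he' => ((Nat.not_odd_iff_even.mpr he') ho).elim⟩,
      ⟨fun _ => h2, fun he' => ((Nat.not_odd_iff_even.mpr he') ho).elim⟩⟩


theorem s_at_half_f_odd (f : ℕ → ℕ) (hf : IsFSeq f) (s : ℕ → ℕ) (hs : IsFixedSeq s) :
    ∀ k : ℕ,
      ((Odd k → s (f (2*k+1) / 2) = 1) ∧ (Even k → s (f (2*k+1) / 2) = 0)) ∧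
      ((Odd k → s (f (2*k+1) / 2 - 1) = 0) ∧ (Even k → s (f (2*k+1) / 2 - 1) = 1)) := by
  exact s_at_half_f_odd' f hf s hs
end
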